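/- Equivalence of recurrent and parallel CASTLE (Theorem 1): Let Qᵁ,Kᵁ,Vᵁ,Qᶜ,Kᶜ,Vᶜ ∈ ℝ^{L×d}. For each t, define the recurrent output o_t = softmax(sᶜ_t − silu(sᵁ_t)) Vᶜₜ ∈ ℝ^{1×d}, where sᶜ_t = qᶜ_t (Kᶜₜ)ᵀ/√d, sᵁ_t = qᶜ_t (Uᵗ)ᵀ/√d, Uᵗ = σ(Qᵁₜ(Kᵁₜ)ᵀ/√d + Mᵁₜ)Vᵁₜ, and silu(x) = x·σ(x) entrywise. Define the parallel output O = row-softmax(QᶜKᶜᵀ/√d + Mᶜ − silu(Sᵁ)) Vᶜ, with Sᵁ = ((QᶜVᵁᵀ/√d) ⊙ M̃ᶜ)(σ(QᵁKᵁᵀ/√d + Mᵁ))ᵀ. Then the t-th row of O equals o_t for every 1 ≤ t ≤ L. -/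
import Mathlib


open Matrix

/-- The logistic sigmoid `σ(x) = 1/(1+e^{−x})`. -/
noncomputable def sigmoid (x : ℝ) : ℝ := 1 / (1 + Real.exp (-x))

/-- `silu(x) = x·σ(x)`. -/
noncomputable def silu (x : ℝ) : ℝ := x * sigmoid x

/-- Softmax of a real vector. -/
noncomputable def softmaxFin {n : ℕ} (v : Fin n → ℝ) : Fin n → ℝ :=
  fun i => Real.exp (v i) / ∑ j, Real.exp (v j)

/-- `σ(Q Kᵀ/√d + Mᵁ)` where `Mᵁ_{ij} = 0` if `i < j` and `−∞` otherwise, with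
`σ(−∞) = 0`. -/
noncomputable def maskedSig (n d : ℕ) (Q K : Matrix (Fin n) (Fin d) ℝ) :
    Matrix (Fin n) (Fin n) ℝ :=
  Matrix.of fun i j =>
    if (i : ℕ) < (j : ℕ) then sigmoid ((Q * Kᵀ) i j / Real.sqrt d) else 0

/-- The first `t` rows of an `L×d` matrix. -/
def firstRows (L d t : ℕ) (ht : t ≤ L) (M : Matrix (Fin L) (Fin d) ℝ) :
    Matrix (Fin t) (Fin d) ℝ :=
  Matrix.of fun i c => M (Fin.castLE ht i) c

/-- The recurrent CASTLE output when generating the `(t+1)`-th token: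
`o_t = softmax(sᶜ_t − silu(sᵁ_t)) Vᶜₜ ∈ ℝ^{1×d}`, with `sᶜ_t = qᶜ_t (Kᶜₜ)ᵀ/√d`,
`sᵁ_t = qᶜ_t (Uᵗ)ᵀ/√d`, `Uᵗ = σ(Qᵁₜ(Kᵁₜ)ᵀ/√d + Mᵁₜ)Vᵁₜ` (subscript `t` = first `t` rows,
`qᶜ_t` = the `t`-th row of `Qᶜ`). -/
noncomputable def castleRec (L d : ℕ) (Qu Ku Vu Qc Kc Vc : Matrix (Fin L) (Fin d) ℝ)
    (t : ℕ) (ht : t ≤ L) (ht1 : 1 ≤ t) : Fin d → ℝ :=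
  let qt : Fin d → ℝ := Qc ⟨t - 1, by omega⟩
  let Ut : Matrix (Fin t) (Fin d) ℝ :=
    maskedSig t d (firstRows L d t ht Qu) (firstRows L d t ht Ku) * firstRows L d t ht Vu
  let sC : Fin t → ℝ := fun j => (qt ⬝ᵥ fun c => firstRows L d t ht Kc j c) / Real.sqrt d
  let sU : Fin t → ℝ := fun j => (qt ⬝ᵥ fun c => Ut j c) / Real.sqrt d
  Matrix.vecMul (softmaxFin fun j => sC j - silu (sU j)) (firstRows L d t ht Vc)

/-- The parallel CASTLE output: `O = row-softmax(Qᶜ Kᶜᵀ/√d + Mᶜ − silu(Sᵁ)) Vᶜ`, with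
`Sᵁ = ((Qᶜ Vᵁᵀ/√d) ⊙ M̃ᶜ)(σ(Qᵁ Kᵁᵀ/√d + Mᵁ))ᵀ`; the causal mask `Mᶜ` (`−∞` above the
diagonal, with `exp(−∞) = 0`) is realized by zeroing the above-diagonal softmax weights. -/
noncomputable def castlePar (L d : ℕ) (Qu Ku Vu Qc Kc Vc : Matrix (Fin L) (Fin d) ℝ) :
    Matrix (Fin L) (Fin d) ℝ :=
  let S := maskedSig L d Qu Ku
  let Su : Matrix (Fin L) (Fin L) ℝ :=
    (Matrix.of fun i j =>
      (Qc * Vuᵀ) i j / Real.sqrt d * (if (j : ℕ) ≤ (i : ℕ) then (1 : ℝ) else 0)) * Sᵀ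
  let A : Matrix (Fin L) (Fin L) ℝ :=
    Matrix.of fun i j => (Qc * Kcᵀ) i j / Real.sqrt d - silu (Su i j)
  let P : Matrix (Fin L) (Fin L) ℝ :=
    Matrix.of fun i j =>
      if (j : ℕ) ≤ (i : ℕ) then
        Real.exp (A i j) /
          ∑ j' : Fin L, (if (j' : ℕ) ≤ (i : ℕ) then Real.exp (A i j') else 0)
      else 0
  P * Vc

lemma sum_trunc {L t : ℕ} (ht : t ≤ L) (f : Fin L → ℝ) :
    (∑ j : Fin L, if (j:ℕ) < t then f j else 0) = ∑ j : Fin t, f (Fin.castLE ht j) := by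
  set F : ℕ → ℝ := fun n => if h : n < t then f ⟨n, lt_of_lt_of_le h ht⟩ else 0 with hF
  have h1 : (∑ j : Fin L, if (j:ℕ) < t then f j else 0) = ∑ j : Fin L, F (j:ℕ) := by
    apply Finset.sum_congr rfl; intro j _
    by_cases h : (j:ℕ) < t <;> simp [hF, h]
  have h2 : (∑ j : Fin t, f (Fin.castLE ht j)) = ∑ j : Fin t, F (j:ℕ) := by
    apply Finset.sum_congr rfl; intro j _
    simp [hF, j.isLt, Fin.castLE]
  rw [h1, h2, Fin.sum_univ_eq_sum_range, Fin.sum_univ_eq_sum_range]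
  symm
  apply Finset.sum_subset (Finset.range_subset_range.mpr ht)
  intro n _ hn
  simp only [Finset.mem_range, not_lt] at hn
  simp [hF, Nat.not_lt.mpr hn]

lemma key (L d t : ℕ) (ht : t ≤ L) (ht1 : 1 ≤ t)
    (Qu Ku Vu Kc Vc : Matrix (Fin L) (Fin d) ℝ) (q : Fin d → ℝ) (c : Fin d) :
    (∑ x : Fin L,
      (if (x:ℕ) ≤ t - 1 then
        Real.exp ((∑ j, q j * Kcᵀ j x) / Real.sqrt d -
          silu (∑ x1 : Fin L, ((∑ j, q j * Vuᵀ j x1) / Real.sqrt d *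
              if (x1:ℕ) ≤ t - 1 then (1:ℝ) else 0) * (maskedSig L d Qu Ku)ᵀ x1 x)) /
        ∑ x' : Fin L,
          (if (x':ℕ) ≤ t - 1 then
            Real.exp ((∑ j, q j * Kcᵀ j x') / Real.sqrt d -
              silu (∑ x1 : Fin L, ((∑ j, q j * Vuᵀ j x1) / Real.sqrt d *
                  if (x1:ℕ) ≤ t - 1 then (1:ℝ) else 0) * (maskedSig L d Qu Ku)ᵀ x1 x')) else 0)
      else 0) * Vc x c) =
    ∑ x : Fin t,
      softmaxFin (fun j =>
        (∑ y : Fin d, q y * firstRows L d t ht Kc j y) / Real.sqrt d -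
          silu ((∑ y : Fin d, q y * ∑ k : Fin t,
            maskedSig t d (firstRows L d t ht Qu) (firstRows L d t ht Ku) j k *
              firstRows L d t ht Vu k y) / Real.sqrt d)) x *
        firstRows L d t ht Vc x c := by
  set F : Fin L → ℝ := fun x => (∑ j, q j * Kcᵀ j x) / Real.sqrt d -
      silu (∑ x1 : Fin L, ((∑ j, q j * Vuᵀ j x1) / Real.sqrt d *
          if (x1:ℕ) ≤ t - 1 then (1:ℝ) else 0) * (maskedSig L d Qu Ku)ᵀ x1 x) with hFdef
  set G : Fin t → ℝ := fun j =>
        (∑ y : Fin d, q y * firstRows L d t ht Kc j y) / Real.sqrt d -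
          silu ((∑ y : Fin d, q y * ∑ k : Fin t,
            maskedSig t d (firstRows L d t ht Qu) (firstRows L d t ht Ku) j k *
              firstRows L d t ht Vu k y) / Real.sqrt d) with hGdef
  have hle : ∀ m : ℕ, (m ≤ t - 1) ↔ (m < t) := fun m => by omega
  have hS' : ∀ x k : Fin t,
      maskedSig t d (firstRows L d t ht Qu) (firstRows L d t ht Ku) x k
        = maskedSig L d Qu Ku (Fin.castLE ht x) (Fin.castLE ht k) := by
    intro x k
    simp [maskedSig, Matrix.mul_apply, firstRows, Fin.castLE]
  have hFG : ∀ x : Fin t, F (Fin.castLE ht x) = G x := by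
    intro x
    rw [hFdef, hGdef]
    simp only
    congr 1
    congr 1
    calc (∑ x1 : Fin L, ((∑ j, q j * Vuᵀ j x1) / Real.sqrt d *
          if (x1:ℕ) ≤ t - 1 then (1:ℝ) else 0) * (maskedSig L d Qu Ku)ᵀ x1 (Fin.castLE ht x))
        = ∑ x1 : Fin L, (if (x1:ℕ) < t then
            (∑ j, q j * Vuᵀ j x1) / Real.sqrt d * maskedSig L d Qu Ku (Fin.castLE ht x) x1 else 0) := by
          apply Finset.sum_congr rfl; intro x1 _
          by_cases h : (x1:ℕ) < t
          · rw [if_pos h, if_pos ((hle _).mpr h)]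
            simp [Matrix.transpose_apply]
          · rw [if_neg h, if_neg (fun hc => h ((hle _).mp hc))]
            ring
      _ = ∑ k : Fin t, (∑ j, q j * Vuᵀ j (Fin.castLE ht k)) / Real.sqrt d *
            maskedSig L d Qu Ku (Fin.castLE ht x) (Fin.castLE ht k) :=
          sum_trunc ht _
      _ = (∑ y : Fin d, q y * ∑ k : Fin t,
            maskedSig t d (firstRows L d t ht Qu) (firstRows L d t ht Ku) x k *
              firstRows L d t ht Vu k y) / Real.sqrt d := by
          simp only [Finset.mul_sum]
          rw [Finset.sum_comm, Finset.sum_div]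
          apply Finset.sum_congr rfl; intro k _
          rw [hS' x k, div_mul_eq_mul_div]
          congr 1
          rw [Finset.sum_mul]
          apply Finset.sum_congr rfl; intro y _
          simp only [firstRows, Matrix.of_apply, Matrix.transpose_apply]
          ring
  have hD : (∑ x' : Fin L, (if (x':ℕ) ≤ t - 1 then Real.exp (F x') else 0))
      = ∑ j : Fin t, Real.exp (G j) := by
    have : (∑ x' : Fin L, (if (x':ℕ) ≤ t - 1 then Real.exp (F x') else 0))
        = ∑ x' : Fin L, (if (x':ℕ) < t then Real.exp (F x') else 0) := by
      apply Finset.sum_congr rfl; intro x' _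
      simp only [hle]
    rw [this, sum_trunc ht]
    exact Finset.sum_congr rfl fun j _ => by rw [hFG]
  calc (∑ x : Fin L, (if (x:ℕ) ≤ t - 1 then Real.exp (F x) /
          (∑ x' : Fin L, (if (x':ℕ) ≤ t - 1 then Real.exp (F x') else 0)) else 0) * Vc x c)
      = ∑ x : Fin L, (if (x:ℕ) < t then Real.exp (F x) /
          (∑ j : Fin t, Real.exp (G j)) * Vc x c else 0) := by
        apply Finset.sum_congr rfl; intro x _
        by_cases h : (x:ℕ) < t
        · rw [if_pos ((hle _).mpr h), if_pos h, hD]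
        · rw [if_neg (fun hc => h ((hle _).mp hc)), if_neg h, zero_mul]
    _ = ∑ x : Fin t, Real.exp (F (Fin.castLE ht x)) /
          (∑ j : Fin t, Real.exp (G j)) * Vc (Fin.castLE ht x) c := sum_trunc ht _
    _ = ∑ x : Fin t, softmaxFin G x * firstRows L d t ht Vc x c := by
        apply Finset.sum_congr rfl; intro x _
        rw [hFG]
        rfl

/-- Theorem 1 of the paper: equivalence of the recurrent and parallel
forms of CASTLE — the `t`-th row of the parallel output equals the recurrent output `o_t`
for every `1 ≤ t ≤ L`. -/
theorem stmt11 (L d : ℕ) (Qu Ku Vu Qc Kc Vc : Matrix (Fin L) (Fin d) ℝ)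
    (t : ℕ) (ht : t ≤ L) (ht1 : 1 ≤ t) :
    ∀ c : Fin d, castlePar L d Qu Ku Vu Qc Kc Vc ⟨t - 1, by omega⟩ c =
      castleRec L d Qu Ku Vu Qc Kc Vc t ht ht1 c := by
  intro c
  simp only [castlePar, castleRec, Matrix.mul_apply, Matrix.vecMul, dotProduct,
    Matrix.of_apply]
  exact key L d t ht ht1 Qu Ku Vu Kc Vc (Qc ⟨t - 1, by omega⟩) c
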